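/- arXiv:2207.02115 — 4 statements merged into one kernel-verified Lean document; each statement's English description precedes it below -/
import Mathlib

section
/- If T is a power partial isometry contraction on H, then the unitary part H_u = ⋂_{n ∈ ℤ₊} [ker(I - T^{*n}T^n) ∩ ker(I - T^n T^{*n})] equals ⋂_{n ∈ ℤ₊} (T^{*n}H ∩ T^n H). -/
/-!
A partial isometry `A` preserves inner products on `(ker A)ᗮ`, so `A† A` fixes that subspace
pointwise and `A A† A = A`; taking adjoints, `A† A A† = A†`. Whenever `f g f = f`, the kernel of
`1 - f g` is exactly `range f`. Applied to `T ^ n` (a partial isometry also for `n = 0`) with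
`g = (T ^ n)†`, and to `(T ^ n)†` with `g = T ^ n`, this identifies the two kernels at each stage
`n` with the two ranges.
-/

open scoped InnerProductSpace

namespace ContinuousLinearMap

theorem ker_one_sub_comp_eq_range {R M : Type*} [Ring R] [TopologicalSpace M]
    [AddCommGroup M] [IsTopologicalAddGroup M] [Module R M] {f g : M →L[R] M}
    (h : f ∘L g ∘L f = f) : (1 - f ∘L g).ker = f.range := by
  ext x
  simp only [LinearMap.mem_ker, coe_coe, FunLike.coe_sub, Pi.sub_apply, coe_comp,
    Function.comp_apply, sub_eq_zero, LinearMap.mem_range]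
  constructor
  · intro hx
    exact ⟨g x, hx.symm⟩
  · rintro ⟨y, rfl⟩
    exact (congrArg (· y) h).symm

variable {𝕜 E F : Type*} [RCLike 𝕜] [NormedAddCommGroup E] [InnerProductSpace 𝕜 E]
  [NormedAddCommGroup F] [InnerProductSpace 𝕜 F]

def IsPartialIsometry (A : E →L[𝕜] F) : Prop :=
  ∀ x ∈ A.kerᗮ, ‖A x‖ = ‖x‖

namespace IsPartialIsometry

variable [CompleteSpace E] {A : E →L[𝕜] F}

theorem inner_map_map (hA : A.IsPartialIsometry) {x : E} (hx : x ∈ A.kerᗮ) (y : E) :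
    ⟪A x, A y⟫_𝕜 = ⟪x, y⟫_𝕜 := by
  obtain ⟨y₀, hy₀, y₁, hy₁, rfl⟩ := A.ker.exists_add_mem_mem_orthogonal y
  have hA_on : ∀ z : A.kerᗮ, ‖(A.toLinearMap ∘ₗ A.kerᗮ.subtype) z‖ = ‖z‖ := fun z => hA z z.2
  have := (LinearMap.norm_map_iff_inner_map_map _).mp hA_on ⟨x, hx⟩ ⟨y₁, hy₁⟩
  rw [map_add, show A y₀ = 0 from hy₀, zero_add, inner_add_right,
    Submodule.inner_left_of_mem_orthogonal hy₀ hx, zero_add]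
  simpa using this

variable [CompleteSpace F]

theorem adjoint_apply_apply (hA : A.IsPartialIsometry) {x : E} (hx : x ∈ A.kerᗮ) :
    adjoint A (A x) = x :=
  ext_inner_right 𝕜 fun y => by rw [adjoint_inner_left, hA.inner_map_map hx]

theorem comp_adjoint_comp_self (hA : A.IsPartialIsometry) : A ∘L adjoint A ∘L A = A := by
  ext x
  obtain ⟨x₀, hx₀, x₁, hx₁, rfl⟩ := A.ker.exists_add_mem_mem_orthogonal x
  simp only [coe_comp, Function.comp_apply, map_add, show A x₀ = 0 from hx₀, map_zero, zero_add,
    hA.adjoint_apply_apply hx₁]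

theorem adjoint_comp_self_comp_adjoint (hA : A.IsPartialIsometry) :
    adjoint A ∘L A ∘L adjoint A = adjoint A := by
  simpa only [adjoint_comp, adjoint_adjoint, comp_assoc] using
    congrArg adjoint hA.comp_adjoint_comp_self

end IsPartialIsometry

end ContinuousLinearMap

open ContinuousLinearMap

theorem stmt6_general {H : Type*} [NormedAddCommGroup H] [InnerProductSpace ℂ H] [CompleteSpace H]
    (T : H →L[ℂ] H)
    (hppi : ∀ n : ℕ, 1 ≤ n → ∀ h ∈ (LinearMap.ker ((T ^ n : H →L[ℂ] H) : H →ₗ[ℂ] H))ᗮ, ‖(T ^ n) h‖ = ‖h‖) :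
    (⨅ n : ℕ, (LinearMap.ker (((1 : H →L[ℂ] H) - adjoint (T ^ n) ∘L (T ^ n) : H →L[ℂ] H) : H →ₗ[ℂ] H) ⊓
        LinearMap.ker (((1 : H →L[ℂ] H) - (T ^ n) ∘L adjoint (T ^ n) : H →L[ℂ] H) : H →ₗ[ℂ] H)))
      = ⨅ n : ℕ, (LinearMap.range ((adjoint (T ^ n) : H →L[ℂ] H) : H →ₗ[ℂ] H) ⊓ LinearMap.range ((T ^ n : H →L[ℂ] H) : H →ₗ[ℂ] H)) := by
  have hpi : ∀ n, (T ^ n).IsPartialIsometry := by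
    rintro (_ | n)
    · intro x _
      simp
    · exact hppi (n + 1) n.succ_pos
  refine iInf_congr fun n => ?_
  rw [ker_one_sub_comp_eq_range (hpi n).adjoint_comp_self_comp_adjoint,
    ker_one_sub_comp_eq_range (hpi n).comp_adjoint_comp_self]

theorem stmt6 {H : Type*} [NormedAddCommGroup H] [InnerProductSpace ℂ H] [CompleteSpace H]
    (T : H →L[ℂ] H) (hT : ∀ h : H, ‖T h‖ ≤ ‖h‖)
    (hppi : ∀ n : ℕ, 1 ≤ n → ∀ h ∈ (LinearMap.ker ((T ^ n : H →L[ℂ] H) : H →ₗ[ℂ] H))ᗮ, ‖(T ^ n) h‖ = ‖h‖) :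
    (⨅ n : ℕ, (LinearMap.ker (((1 : H →L[ℂ] H) - adjoint (T ^ n) ∘L (T ^ n) : H →L[ℂ] H) : H →ₗ[ℂ] H) ⊓
        LinearMap.ker (((1 : H →L[ℂ] H) - (T ^ n) ∘L adjoint (T ^ n) : H →L[ℂ] H) : H →ₗ[ℂ] H)))
      = ⨅ n : ℕ, (LinearMap.range ((adjoint (T ^ n) : H →L[ℂ] H) : H →ₗ[ℂ] H) ⊓ LinearMap.range ((T ^ n : H →L[ℂ] H) : H →ₗ[ℂ] H)) :=
  stmt6_general T hppi
end

section
/- Let (T₁, T₂) be a pair of bounded operators on H with T₁ a contraction, and suppose there is a unitary U commuting with T₁ and T₂ such that T₁T₂ = U T₂T₁ and T₁*T₂ = U* T₂T₁*. Then the unitary part H_u¹ and completely non-unitary part H_{¬u}¹ of the canonical decomposition of T₁ both reduce T₂. -/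
open ContinuousLinearMap

/-- The unitary part of the canonical decomposition of a contraction. -/
noncomputable def unitaryPart {H : Type*} [NormedAddCommGroup H] [InnerProductSpace ℂ H] [CompleteSpace H]
    (T : H →L[ℂ] H) : Submodule ℂ H :=
  ⨅ m : ℕ, (LinearMap.ker (((1 : H →L[ℂ] H) - adjoint (T ^ m) ∘L (T ^ m) : H →L[ℂ] H) : H →ₗ[ℂ] H) ⊓
    LinearMap.ker (((1 : H →L[ℂ] H) - (T ^ m) ∘L adjoint (T ^ m) : H →L[ℂ] H) : H →ₗ[ℂ] H))

/-! Iterating the twisted relations gives `T₁ᵐ T₂ = Uᵐ T₂ T₁ᵐ` and `T₁*ᵐ T₂ = U*ᵐ T₂ T₁*ᵐ`, and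
since `U` commutes with `T₁` and `T₁*`, the powers of `U` and `U*` cancel in `T₁*ᵐ T₁ᵐ T₂` and
`T₁ᵐ T₁*ᵐ T₂`. So `T₂` commutes with the self-adjoint operators `T₁*ᵐ T₁ᵐ` and `T₁ᵐ T₁*ᵐ`, hence so
does `T₂*`, and both preserve their common fixed space `H_u¹`. A subspace invariant under `T₂` and
`T₂*` has an orthogonal complement with the same property. -/

section TwistedCommutation

variable {R : Type*} [Monoid R] {a b v : R}

theorem pow_mul_eq_pow_mul_mul_pow (hab : a * b = v * (b * a)) (hva : Commute v a) (m : ℕ) :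
    a ^ m * b = v ^ m * (b * a ^ m) := by
  induction m with
  | zero => simp
  | succ m ih =>
    calc a ^ (m + 1) * b = a * (a ^ m * b) := by rw [pow_succ', mul_assoc]
      _ = v ^ m * (a * b) * a ^ m := by
        rw [ih, ← mul_assoc, ← (hva.pow_left m).eq, mul_assoc, mul_assoc, mul_assoc]
      _ = v ^ (m + 1) * (b * a ^ (m + 1)) := by
        rw [hab, pow_succ, pow_succ']; simp only [mul_assoc]

variable [StarMul R]

theorem Commute.star_right_of_mem_unitary (hv : v ∈ unitary R) (h : Commute v a) :
    Commute v (star a) := by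
  have hs : star v * star a = star a * star v := h.star_star.eq
  calc v * star a = v * (star a * star v) * v := by
        rw [mul_assoc, mul_assoc, Unitary.star_mul_self_of_mem hv, mul_one]
    _ = v * (star v * star a) * v := by rw [hs]
    _ = star a * v := by rw [← mul_assoc, Unitary.mul_star_self_of_mem hv, one_mul]

theorem commute_star_pow_mul_pow_of_twisted (hv : v ∈ unitary R) (hva : Commute v a)
    (h₁ : a * b = v * (b * a)) (h₂ : star a * b = star v * (b * star a)) (m : ℕ) :
    Commute b (star a ^ m * a ^ m) := by
  have hvsa : Commute (star v) (star a) := hva.star_star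
  have hv_sa : Commute v (star a) := hva.star_right_of_mem_unitary hv
  have hvm : v ^ m * star v ^ m = 1 := by
    rw [← star_pow, Unitary.mul_star_self_of_mem (pow_mem hv m)]
  symm
  calc star a ^ m * a ^ m * b = star a ^ m * (v ^ m * (b * a ^ m)) := by
        rw [mul_assoc, pow_mul_eq_pow_mul_mul_pow h₁ hva]
    _ = v ^ m * (star a ^ m * b) * a ^ m := by
        rw [← mul_assoc, ← (hv_sa.pow_pow m m).eq]; simp only [mul_assoc]
    _ = b * (star a ^ m * a ^ m) := by
        rw [pow_mul_eq_pow_mul_mul_pow h₂ hvsa, ← mul_assoc, hvm, one_mul, mul_assoc]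

theorem commute_pow_mul_star_pow_of_twisted (hv : v ∈ unitary R) (hva : Commute v a)
    (h₁ : a * b = v * (b * a)) (h₂ : star a * b = star v * (b * star a)) (m : ℕ) :
    Commute b (a ^ m * star a ^ m) := by
  simpa only [star_star] using commute_star_pow_mul_pow_of_twisted (Unitary.star_mem hv)
    hva.star_star h₂ (by simpa only [star_star] using h₁) m

end TwistedCommutation

section UnitaryPart

variable {H : Type*} [NormedAddCommGroup H] [InnerProductSpace ℂ H] [CompleteSpace H]

theorem mem_unitaryPart_iff {T : H →L[ℂ] H} {x : H} :
    x ∈ unitaryPart T ↔ ∀ m : ℕ, (star T ^ m * T ^ m) x = x ∧ (T ^ m * star T ^ m) x = x := by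
  simp only [unitaryPart, Submodule.mem_iInf, Submodule.mem_inf, LinearMap.mem_ker, coe_coe,
    sub_apply, one_apply_eq_self, comp_apply, mul_apply_eq_comp, sub_eq_zero, ← star_eq_adjoint,
    star_pow, @eq_comm _ x]

theorem unitaryPart_mem_invtSubmodule {T S : H →L[ℂ] H}
    (h : ∀ m : ℕ, Commute S (star T ^ m * T ^ m) ∧ Commute S (T ^ m * star T ^ m)) :
    unitaryPart T ∈ Module.End.invtSubmodule (S : H →ₗ[ℂ] H) := by
  intro x hx
  simp only [Submodule.mem_comap, coe_coe, mem_unitaryPart_iff] at hx ⊢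
  intro m
  rw [← mul_apply_eq_comp, ← (h m).1.eq, mul_apply_eq_comp, (hx m).1,
    ← mul_apply_eq_comp, ← (h m).2.eq, mul_apply_eq_comp, (hx m).2]
  exact ⟨rfl, rfl⟩

theorem unitaryPart_mem_invtSubmodule_adjoint {T S : H →L[ℂ] H}
    (h : ∀ m : ℕ, Commute S (star T ^ m * T ^ m) ∧ Commute S (T ^ m * star T ^ m)) :
    unitaryPart T ∈ Module.End.invtSubmodule (adjoint S : H →ₗ[ℂ] H) :=
  unitaryPart_mem_invtSubmodule fun m => by
    simpa only [star_mul, star_pow, star_star, ← star_eq_adjoint] using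
      And.intro (h m).1.star_star (h m).2.star_star

end UnitaryPart

theorem stmt11_general {H : Type*} [NormedAddCommGroup H] [InnerProductSpace ℂ H] [CompleteSpace H]
    (T₁ T₂ U : H →L[ℂ] H)
    (hUunit : adjoint U ∘L U = 1 ∧ U ∘L adjoint U = 1)
    (hUT₁ : Commute U T₁)
    (htw1 : T₁ ∘L T₂ = U ∘L (T₂ ∘L T₁))
    (htw2 : adjoint T₁ ∘L T₂ = adjoint U ∘L (T₂ ∘L adjoint T₁)) :
    (∀ x ∈ unitaryPart T₁, T₂ x ∈ unitaryPart T₁) ∧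
    (∀ x ∈ unitaryPart T₁, adjoint T₂ x ∈ unitaryPart T₁) ∧
    (∀ x ∈ (unitaryPart T₁)ᗮ, T₂ x ∈ (unitaryPart T₁)ᗮ) ∧
    (∀ x ∈ (unitaryPart T₁)ᗮ, adjoint T₂ x ∈ (unitaryPart T₁)ᗮ) := by
  have hU : U ∈ unitary (H →L[ℂ] H) := Unitary.mem_iff.mpr hUunit
  have hcomm : ∀ m : ℕ, Commute T₂ (star T₁ ^ m * T₁ ^ m) ∧ Commute T₂ (T₁ ^ m * star T₁ ^ m) :=
    fun m => ⟨commute_star_pow_mul_pow_of_twisted hU hUT₁ htw1 htw2 m,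
      commute_pow_mul_star_pow_of_twisted hU hUT₁ htw1 htw2 m⟩
  have hinv := unitaryPart_mem_invtSubmodule hcomm
  have hinv_adj := unitaryPart_mem_invtSubmodule_adjoint hcomm
  exact ⟨hinv, hinv_adj, orthogonal_mem_invtSubmodule hinv_adj,
    orthogonal_mem_invtSubmodule (by rwa [adjoint_adjoint])⟩

theorem stmt11 {H : Type*} [NormedAddCommGroup H] [InnerProductSpace ℂ H] [CompleteSpace H]
    (T₁ T₂ U : H →L[ℂ] H) (hT₁ : ∀ h : H, ‖T₁ h‖ ≤ ‖h‖)
    (hUunit : adjoint U ∘L U = 1 ∧ U ∘L adjoint U = 1)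
    (hUT₁ : Commute U T₁) (hUT₂ : Commute U T₂)
    (htw1 : T₁ ∘L T₂ = U ∘L (T₂ ∘L T₁))
    (htw2 : adjoint T₁ ∘L T₂ = adjoint U ∘L (T₂ ∘L adjoint T₁)) :
    (∀ x ∈ unitaryPart T₁, T₂ x ∈ unitaryPart T₁) ∧
    (∀ x ∈ unitaryPart T₁, adjoint T₂ x ∈ unitaryPart T₁) ∧
    (∀ x ∈ (unitaryPart T₁)ᗮ, T₂ x ∈ (unitaryPart T₁)ᗮ) ∧
    (∀ x ∈ (unitaryPart T₁)ᗮ, adjoint T₂ x ∈ (unitaryPart T₁)ᗮ) :=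
  stmt11_general T₁ T₂ U hUunit hUT₁ htw1 htw2
end

section
/- Let (T₁, T₂) be a doubly twisted pair of isometries on H with twist U. Then for every m ≥ 1, (I - T₂^m T₂^{*m})(ker T₁*) = ⊕_{k=0}^{m-1} T₂^k (ker T₁* ∩ ker T₂*), an orthogonal direct sum. -/
/-!
The twist relations say that `T₁*` intertwines `T₂` and `T₂*` up to unitary factors
(`T₁* T₂ = U* T₂ T₁*` and `T₁* T₂* = T₂* U T₁*`), so `ker T₁*` reduces `T₂`. For an isometry `V`
and a `V`-reducing subspace `K`, the telescoping identity
`1 - V^m V*^m = ∑_{k<m} V^k (1 - V V*) V*^k` writes `(1 - V^m V*^m) x`, `x ∈ K`, as a sum of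
vectors of `V^k (K ⊓ ker V*)`; conversely `V*^m` kills `V^k (K ⊓ ker V*)` for `k < m`. The
summands are orthogonal because `ker V*` is wandering: `⟪V^k w, V^(k+j+1) w'⟫ = ⟪V* w, V^j w'⟫`.
-/

open ContinuousLinearMap Finset Module.End

theorem Module.End.invtSubmodule.pow_mem {R M : Type*} [Semiring R] [AddCommMonoid M] [Module R M]
    {f : End R M} {p : Submodule R M} (hf : p ∈ f.invtSubmodule) (n : ℕ) :
    p ∈ (f ^ n).invtSubmodule := by
  induction n with
  | zero => simp
  | succ n ih => rw [pow_succ']; exact invtSubmodule.comp f hf ih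

theorem Module.End.ker_mem_invtSubmodule_of_mul_eq {R M : Type*} [Semiring R] [AddCommMonoid M]
    [Module R M] {f g h : End R M} (hfg : f * g = h * f) : LinearMap.ker f ∈ g.invtSubmodule :=
  fun x hx => by
    rw [Submodule.mem_comap, LinearMap.mem_ker, ← mul_apply, hfg, mul_apply,
      LinearMap.mem_ker.mp hx, map_zero]

theorem one_sub_pow_mul_pow_eq_sum {R : Type*} [Ring R] (a b : R) (m : ℕ) :
    1 - a ^ m * b ^ m = ∑ k ∈ range m, a ^ k * (1 - a * b) * b ^ k := by
  have hterm : ∀ k, a ^ k * (1 - a * b) * b ^ k = a ^ k * b ^ k - a ^ (k + 1) * b ^ (k + 1) := by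
    intro k
    rw [pow_succ a, pow_succ' b]
    noncomm_ring
  simp_rw [hterm, sum_range_sub', pow_zero, one_mul]

theorem star_mul_star_eq_of_twist {R : Type*} [Monoid R] [StarMul R] {t₁ t₂ u : R}
    (hu : u ∈ unitary R) (hut₁ : Commute u t₁) (htw : t₁ * t₂ = u * (t₂ * t₁)) :
    star t₁ * star t₂ = star t₂ * u * star t₁ := by
  have hstar : star t₂ * star t₁ = star t₁ * star t₂ * star u := by
    simpa [mul_assoc] using congrArg star htw
  have hcomm : Commute u (star t₁) :=
    (Commute.units_inv_left_iff (u := Unitary.toUnits ⟨u, hu⟩)).mp (commute_star_star.mpr hut₁)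
  calc star t₁ * star t₂ = star t₁ * star t₂ * star u * u := by
        rw [mul_assoc _ (star u), Unitary.star_mul_self_of_mem hu, mul_one]
    _ = star t₂ * (star t₁ * u) := by rw [← hstar, mul_assoc]
    _ = star t₂ * u * star t₁ := by rw [← hcomm.eq, mul_assoc]

namespace ContinuousLinearMap

variable {𝕜 E : Type*} [RCLike 𝕜] [NormedAddCommGroup E] [InnerProductSpace 𝕜 E] [CompleteSpace E]
  {V : E →L[𝕜] E}

theorem adjoint_pow (V : E →L[𝕜] E) (n : ℕ) : adjoint (V ^ n) = adjoint V ^ n := by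
  simp only [← star_eq_adjoint, star_pow]

theorem adjoint_pow_comp_pow (hV : adjoint V ∘L V = 1) (n : ℕ) : adjoint (V ^ n) ∘L V ^ n = 1 := by
  rw [adjoint_pow]
  exact pow_mul_pow_eq_one n hV

theorem adjoint_pow_apply_pow_apply (hV : adjoint V ∘L V = 1) (n : ℕ) (x : E) :
    adjoint (V ^ n) ((V ^ n) x) = x :=
  congr($(adjoint_pow_comp_pow hV n) x)

theorem isOrtho_map_pow_ker_adjoint (hV : adjoint V ∘L V = 1) {k l : ℕ} (hkl : k ≠ l) :
    ((LinearMap.ker (adjoint V : E →ₗ[𝕜] E)).map (V ^ k : E →ₗ[𝕜] E)) ⟂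
      ((LinearMap.ker (adjoint V : E →ₗ[𝕜] E)).map (V ^ l : E →ₗ[𝕜] E)) := by
  wlog hlt : k < l generalizing k l
  · exact (this hkl.symm (hkl.lt_or_gt.resolve_left hlt)).symm
  obtain ⟨j, rfl⟩ := Nat.exists_eq_add_of_lt hlt
  rw [Submodule.isOrtho_iff_inner_eq]
  rintro _ ⟨w, hw, rfl⟩ _ ⟨w', -, rfl⟩
  simp only [← toLinearMap_pow, coe_coe]
  rw [add_assoc, pow_add, pow_succ', mul_apply_eq_comp, mul_apply_eq_comp, ← adjoint_inner_right,
    adjoint_pow_apply_pow_apply hV, ← adjoint_inner_left, show adjoint V w = 0 from hw,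
    inner_zero_left]

theorem map_one_sub_pow_comp_adjoint_pow_le (hV : adjoint V ∘L V = 1) {K : Submodule 𝕜 E}
    (hK : K ∈ invtSubmodule (V : E →ₗ[𝕜] E)) (hK' : K ∈ invtSubmodule (adjoint V : E →ₗ[𝕜] E))
    (m : ℕ) :
    K.map ((1 - (V ^ m) ∘L adjoint (V ^ m) : E →L[𝕜] E) : E →ₗ[𝕜] E) ≤
      ⨆ k ∈ range m, (K ⊓ LinearMap.ker (adjoint V : E →ₗ[𝕜] E)).map (V ^ k : E →ₗ[𝕜] E) := by
  rintro _ ⟨x, hx, rfl⟩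
  have hsum : (1 - (V ^ m) ∘L adjoint (V ^ m)) x =
      ∑ k ∈ range m, (V ^ k) ((1 - V ∘L adjoint V) ((adjoint V ^ k) x)) := by
    rw [adjoint_pow]
    simpa using congr($(one_sub_pow_mul_pow_eq_sum V (adjoint V) m) x)
  rw [coe_coe, hsum]
  have hproj : ∀ z, (1 - V ∘L adjoint V) z = z - V (adjoint V z) := fun z => rfl
  refine Submodule.sum_mem _ fun k hk => Submodule.mem_iSup_of_mem k <|
    Submodule.mem_iSup_of_mem hk ⟨_, ⟨?_, ?_⟩, by rw [← toLinearMap_pow, coe_coe]⟩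
  · have hz : (adjoint V ^ k) x ∈ K := by
      rw [← coe_coe, toLinearMap_pow]
      exact invtSubmodule.pow_mem hK' k hx
    rw [hproj]
    exact K.sub_mem hz (hK (hK' hz))
  · change adjoint V _ = 0
    rw [hproj, map_sub, ← comp_apply (adjoint V) V, hV, one_apply_eq_self, sub_self]

theorem iSup_map_pow_le_map_one_sub_pow_comp_adjoint_pow (hV : adjoint V ∘L V = 1)
    {K : Submodule 𝕜 E} (hK : K ∈ invtSubmodule (V : E →ₗ[𝕜] E)) (m : ℕ) :
    ⨆ k ∈ range m, (K ⊓ LinearMap.ker (adjoint V : E →ₗ[𝕜] E)).map (V ^ k : E →ₗ[𝕜] E) ≤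
      K.map ((1 - (V ^ m) ∘L adjoint (V ^ m) : E →L[𝕜] E) : E →ₗ[𝕜] E) := by
  refine iSup₂_le fun k hk => ?_
  rintro _ ⟨w, ⟨hwK, hwV⟩, rfl⟩
  obtain ⟨j, rfl⟩ : ∃ j, m = j + 1 + k := ⟨m - k - 1, by have := mem_range.mp hk; omega⟩
  have hw : adjoint V w = 0 := hwV
  have hvanish : adjoint (V ^ (j + 1 + k)) ((V ^ k) w) = 0 := by
    rw [adjoint_pow, pow_add, mul_apply_eq_comp, ← adjoint_pow V k, adjoint_pow_apply_pow_apply hV,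
      pow_succ, mul_apply_eq_comp, hw, map_zero]
  refine ⟨_, invtSubmodule.pow_mem hK k hwK, ?_⟩
  rw [← toLinearMap_pow, coe_coe, coe_coe, sub_apply, one_apply_eq_self, comp_apply, hvanish,
    map_zero, sub_zero]

theorem map_one_sub_pow_comp_adjoint_pow_eq_iSup (hV : adjoint V ∘L V = 1) {K : Submodule 𝕜 E}
    (hK : K ∈ invtSubmodule (V : E →ₗ[𝕜] E)) (hK' : K ∈ invtSubmodule (adjoint V : E →ₗ[𝕜] E))
    (m : ℕ) :
    K.map ((1 - (V ^ m) ∘L adjoint (V ^ m) : E →L[𝕜] E) : E →ₗ[𝕜] E) =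
      ⨆ k ∈ range m, (K ⊓ LinearMap.ker (adjoint V : E →ₗ[𝕜] E)).map (V ^ k : E →ₗ[𝕜] E) :=
  (map_one_sub_pow_comp_adjoint_pow_le hV hK hK' m).antisymm
    (iSup_map_pow_le_map_one_sub_pow_comp_adjoint_pow hV hK m)

end ContinuousLinearMap

theorem stmt13_general {H : Type*} [NormedAddCommGroup H] [InnerProductSpace ℂ H] [CompleteSpace H]
    (T₁ T₂ U : H →L[ℂ] H)
    (h2iso : adjoint T₂ ∘L T₂ = 1)
    (hUunit : adjoint U ∘L U = 1 ∧ U ∘L adjoint U = 1)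
    (hUT₁ : Commute U T₁)
    (htw1 : T₁ ∘L T₂ = U ∘L (T₂ ∘L T₁))
    (htw2 : adjoint T₁ ∘L T₂ = adjoint U ∘L (T₂ ∘L adjoint T₁)) :
    ∀ m : ℕ, 1 ≤ m →
      (LinearMap.ker (adjoint T₁ : H →ₗ[ℂ] H)).map (((1 : H →L[ℂ] H) - (T₂ ^ m) ∘L adjoint (T₂ ^ m) : H →L[ℂ] H) : H →ₗ[ℂ] H)
        = (⨆ k ∈ Finset.range m,
            ((LinearMap.ker (adjoint T₁ : H →ₗ[ℂ] H) ⊓ LinearMap.ker (adjoint T₂ : H →ₗ[ℂ] H)).map (T₂ ^ k : H →ₗ[ℂ] H))) ∧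
      ∀ k l : ℕ, k < m → l < m → k ≠ l →
        Submodule.IsOrtho
          ((LinearMap.ker (adjoint T₁ : H →ₗ[ℂ] H) ⊓ LinearMap.ker (adjoint T₂ : H →ₗ[ℂ] H)).map (T₂ ^ k : H →ₗ[ℂ] H))
          ((LinearMap.ker (adjoint T₁ : H →ₗ[ℂ] H) ⊓ LinearMap.ker (adjoint T₂ : H →ₗ[ℂ] H)).map (T₂ ^ l : H →ₗ[ℂ] H)) := by
  intro m _
  have hT₂ : LinearMap.ker (adjoint T₁ : H →ₗ[ℂ] H) ∈ invtSubmodule (T₂ : H →ₗ[ℂ] H) :=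
    ker_mem_invtSubmodule_of_mul_eq (h := ((adjoint U ∘L T₂ : H →L[ℂ] H) : H →ₗ[ℂ] H))
      (congrArg (fun A : H →L[ℂ] H => (A : H →ₗ[ℂ] H)) htw2)
  have hT₂' : LinearMap.ker (adjoint T₁ : H →ₗ[ℂ] H) ∈ invtSubmodule (adjoint T₂ : H →ₗ[ℂ] H) :=
    ker_mem_invtSubmodule_of_mul_eq (h := ((adjoint T₂ * U : H →L[ℂ] H) : H →ₗ[ℂ] H))
      (congrArg (fun A : H →L[ℂ] H => (A : H →ₗ[ℂ] H))
        (star_mul_star_eq_of_twist hUunit hUT₁ htw1))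
  refine ⟨map_one_sub_pow_comp_adjoint_pow_eq_iSup h2iso hT₂ hT₂' m, fun k l _ _ hkl => ?_⟩
  exact (isOrtho_map_pow_ker_adjoint h2iso hkl).mono (Submodule.map_mono inf_le_right)
    (Submodule.map_mono inf_le_right)

theorem stmt13 {H : Type*} [NormedAddCommGroup H] [InnerProductSpace ℂ H] [CompleteSpace H]
    (T₁ T₂ U : H →L[ℂ] H)
    (h1iso : adjoint T₁ ∘L T₁ = 1) (h2iso : adjoint T₂ ∘L T₂ = 1)
    (hUunit : adjoint U ∘L U = 1 ∧ U ∘L adjoint U = 1)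
    (hUT₁ : Commute U T₁) (hUT₂ : Commute U T₂)
    (htw1 : T₁ ∘L T₂ = U ∘L (T₂ ∘L T₁))
    (htw2 : adjoint T₁ ∘L T₂ = adjoint U ∘L (T₂ ∘L adjoint T₁)) :
    ∀ m : ℕ, 1 ≤ m →
      (LinearMap.ker (adjoint T₁ : H →ₗ[ℂ] H)).map (((1 : H →L[ℂ] H) - (T₂ ^ m) ∘L adjoint (T₂ ^ m) : H →L[ℂ] H) : H →ₗ[ℂ] H)
        = (⨆ k ∈ Finset.range m,
            ((LinearMap.ker (adjoint T₁ : H →ₗ[ℂ] H) ⊓ LinearMap.ker (adjoint T₂ : H →ₗ[ℂ] H)).map (T₂ ^ k : H →ₗ[ℂ] H))) ∧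
      ∀ k l : ℕ, k < m → l < m → k ≠ l →
        Submodule.IsOrtho
          ((LinearMap.ker (adjoint T₁ : H →ₗ[ℂ] H) ⊓ LinearMap.ker (adjoint T₂ : H →ₗ[ℂ] H)).map (T₂ ^ k : H →ₗ[ℂ] H))
          ((LinearMap.ker (adjoint T₁ : H →ₗ[ℂ] H) ⊓ LinearMap.ker (adjoint T₂ : H →ₗ[ℂ] H)).map (T₂ ^ l : H →ₗ[ℂ] H)) :=
  stmt13_general T₁ T₂ U h2iso hUunit hUT₁ htw1 htw2
end

section
/- Let T₁ = A_r ⊗ M_z^α and T₂ = M_z^α ⊗ I on H²(𝔻) ⊗ H²(𝔻), where A_r z^n = (r^n/2)z^n and M_z^α f = αzf with |r| = 1, |α| ≤ 1. Then T₁ and T₂ are contractions satisfying T₁T₂ = r T₂T₁ and T₂*T₁ = r T₁T₂*. -/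
/-!
Both operators are weighted shifts on the basis `e`: each sends a basis vector to a multiple of
another basis vector along an injective map of indices. By Parseval, weights of modulus at most one
give a contraction; the adjoint of such a shift moves backwards with conjugate weights; and both
commutation relations reduce to comparing scalars on each basis vector, where `r ^ (m + 1) = r * r ^ m`.
-/

open ContinuousLinearMap

open scoped InnerProductSpace ComplexConjugate

namespace Orthonormal

variable {𝕜 E ι : Type*} [RCLike 𝕜] [NormedAddCommGroup E] [InnerProductSpace 𝕜 E]
  {v : ι → E} {d : ι → 𝕜} {x : E}

theorem inner_eq_of_hasSum (hv : Orthonormal 𝕜 v) (hx : HasSum (fun i => d i • v i) x) (j : ι) :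
    ⟪v j, x⟫_𝕜 = d j := by
  have hsingle : HasSum (fun i => ⟪v j, d i • v i⟫_𝕜) ⟪v j, d j • v j⟫_𝕜 :=
    hasSum_single j fun i hi => by rw [inner_smul_right, hv.inner_eq_zero hi.symm, mul_zero]
  refine ((hx.mapL (innerSL 𝕜 (v j))).unique hsingle).trans ?_
  rw [inner_smul_right, inner_self_eq_norm_sq_to_K, hv.1 j]
  simp

theorem hasSum_norm_sq_of_hasSum (hv : Orthonormal 𝕜 v) (hx : HasSum (fun i => d i • v i) x) :
    HasSum (fun i => ‖d i‖ ^ 2) (‖x‖ ^ 2) := by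
  have hterm : ∀ i, ⟪x, d i • v i⟫_𝕜 = ((‖d i‖ ^ 2 : ℝ) : 𝕜) := fun i => by
    rw [inner_smul_right, ← inner_conj_symm, hv.inner_eq_of_hasSum hx i, RCLike.mul_conj]
    norm_cast
  have hsum := hx.mapL (innerSL 𝕜 x)
  simp only [innerSL_apply_apply, hterm, inner_self_eq_norm_sq_to_K] at hsum
  exact_mod_cast hsum

end Orthonormal

namespace HilbertBasis

variable {𝕜 E ι : Type*} [RCLike 𝕜] [NormedAddCommGroup E] [InnerProductSpace 𝕜 E]
  (b : HilbertBasis ι 𝕜 E)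

theorem ext_inner_left {x y : E} (h : ∀ i, ⟪b i, x⟫_𝕜 = ⟪b i, y⟫_𝕜) : x = y :=
  b.repr.injective <| lp.ext <| funext fun i => by simpa only [b.repr_apply_apply] using h i

theorem continuousLinearMap_ext {F : Type*} [NormedAddCommGroup F] [NormedSpace 𝕜 F]
    {T S : E →L[𝕜] F} (h : ∀ i, T (b i) = S (b i)) : T = S :=
  ext_on (Submodule.dense_iff_topologicalClosure_eq_top.mpr b.dense_span)
    (by rintro _ ⟨i, rfl⟩; exact h i)

section WeightedShift

variable {b} {f : ι → ι} {c : ι → 𝕜} {T : E →L[𝕜] E}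

theorem hasSum_apply_of_apply_eq_smul (hT : ∀ i, T (b i) = c i • b (f i)) (x : E) :
    HasSum (fun i => (b.repr x i * c i) • b (f i)) (T x) := by
  convert (b.hasSum_repr x).mapL T using 2 with i
  rw [map_smul, hT i, smul_smul]

theorem norm_apply_le_of_apply_eq_smul (hf : Function.Injective f) {C : ℝ} (hC : 0 ≤ C)
    (hc : ∀ i, ‖c i‖ ≤ C) (hT : ∀ i, T (b i) = c i • b (f i)) (x : E) :
    ‖T x‖ ≤ C * ‖x‖ := by
  have hTx := (b.orthonormal.comp f hf).hasSum_norm_sq_of_hasSum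
    (b.hasSum_apply_of_apply_eq_smul hT x)
  have hx := (b.orthonormal.hasSum_norm_sq_of_hasSum (b.hasSum_repr x)).mul_left (C ^ 2)
  have hsq : ‖T x‖ ^ 2 ≤ (C * ‖x‖) ^ 2 := by
    rw [mul_pow]
    refine hasSum_le (fun i => ?_) hTx hx
    rw [norm_mul, mul_pow, mul_comm]
    exact mul_le_mul_of_nonneg_right (pow_le_pow_left₀ (norm_nonneg _) (hc i) 2) (sq_nonneg _)
  exact pow_le_pow_iff_left₀ (norm_nonneg _) (by positivity) two_ne_zero |>.mp hsq

variable [CompleteSpace E]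

theorem adjoint_apply_image_of_apply_eq_smul (hf : Function.Injective f)
    (hT : ∀ i, T (b i) = c i • b (f i)) (i : ι) :
    adjoint T (b (f i)) = conj (c i) • b i := by
  refine b.ext_inner_left fun k => ?_
  rw [adjoint_inner_right, hT, inner_smul_left, inner_smul_right]
  rcases eq_or_ne k i with rfl | hki
  · simp [b.orthonormal.1]
  · rw [b.orthonormal.inner_eq_zero (hf.ne hki), b.orthonormal.inner_eq_zero hki, mul_zero,
      mul_zero]

theorem adjoint_apply_of_notMem_range (hT : ∀ i, T (b i) = c i • b (f i)) {j : ι}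
    (hj : j ∉ Set.range f) : adjoint T (b j) = 0 := by
  refine b.ext_inner_left fun k => ?_
  rw [adjoint_inner_right, hT, inner_smul_left,
    b.orthonormal.inner_eq_zero fun h => hj ⟨k, h⟩, mul_zero, inner_zero_right]

end WeightedShift

end HilbertBasis

/-- `H` plays the role of `H²(𝔻) ⊗ H²(𝔻)` with orthonormal basis `e (m, n) = z₁^m z₂^n`;
`T₁ = A_r ⊗ M_z^α` and `T₂ = M_z^α ⊗ I`. -/
theorem stmt16 {H : Type*} [NormedAddCommGroup H] [InnerProductSpace ℂ H] [CompleteSpace H]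
    (e : HilbertBasis (ℕ × ℕ) ℂ H) (r α : ℂ) (hr : ‖r‖ = 1) (hα : ‖α‖ ≤ 1)
    (T₁ T₂ : H →L[ℂ] H)
    (hT₁ : ∀ m n : ℕ, T₁ (e (m, n)) = (r ^ m / 2 * α) • e (m, n + 1))
    (hT₂ : ∀ m n : ℕ, T₂ (e (m, n)) = α • e (m + 1, n)) :
    (∀ h : H, ‖T₁ h‖ ≤ ‖h‖) ∧ (∀ h : H, ‖T₂ h‖ ≤ ‖h‖) ∧
    T₁ ∘L T₂ = r • (T₂ ∘L T₁) ∧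
    adjoint T₂ ∘L T₁ = r • (T₁ ∘L adjoint T₂) := by
  have hshift₁ : Function.Injective fun i : ℕ × ℕ => (i.1, i.2 + 1) := fun _ _ h => by
    simpa [Prod.ext_iff] using h
  have hshift₂ : Function.Injective fun i : ℕ × ℕ => (i.1 + 1, i.2) := fun _ _ h => by
    simpa [Prod.ext_iff] using h
  have hweight₁ (i : ℕ × ℕ) : ‖r ^ i.1 / 2 * α‖ ≤ 1 := by
    rw [norm_mul, norm_div, norm_pow, hr, one_pow, RCLike.norm_two]
    linarith [norm_nonneg α]
  have hT₂' (i : ℕ × ℕ) := hT₂ i.1 i.2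
  have hadj_zero (n : ℕ) : adjoint T₂ (e (0, n)) = 0 :=
    e.adjoint_apply_of_notMem_range hT₂' (by simp)
  have hadj_succ (m n : ℕ) : adjoint T₂ (e (m + 1, n)) = conj α • e (m, n) :=
    e.adjoint_apply_image_of_apply_eq_smul hshift₂ hT₂' (m, n)
  refine ⟨fun h => ?_, fun h => ?_, ?_, ?_⟩
  · simpa using e.norm_apply_le_of_apply_eq_smul hshift₁ zero_le_one hweight₁
      (fun i => hT₁ i.1 i.2) h
  · simpa using e.norm_apply_le_of_apply_eq_smul hshift₂ zero_le_one (fun _ => hα) hT₂' h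
  · refine e.continuousLinearMap_ext fun ⟨m, n⟩ => ?_
    simp only [comp_apply, smul_apply, hT₁, hT₂, map_smul, smul_smul]
    ring_nf
  · refine e.continuousLinearMap_ext ?_
    rintro ⟨_ | m, n⟩
    · simp [hT₁, hadj_zero]
    · simp only [comp_apply, smul_apply, hT₁, hadj_succ, map_smul, smul_smul]
      ring_nf
end
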